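/- arXiv:1103.2093 — 2 statements merged into one kernel-verified Lean document; each statement's English description precedes it below -/
import Mathlib

section
/- Every facet of a Q-reflexive polytope contains a lattice point. Precisely: let Δ ⊆ ℝ^d be a Q-reflexive polytope and let v be an extreme point of Δ*. Then min_{x ∈ Δ} ⟨x, v⟩ = −1, and the facet F = {x ∈ Δ : ⟨x, v⟩ = −1} satisfies F ∩ ℤ^d ≠ ∅. -/
open Pointwise

noncomputable section

/-- The standard inner product on `n → ℝ`. -/
def dot {n : Type*} [Fintype n] (x y : n → ℝ) : ℝ := ∑ i, x i * y i

/-- The lattice points of `n → ℝ`: points with integer coordinates. -/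
def latt (n : Type*) [Fintype n] : Set (n → ℝ) := {x | ∀ i, ∃ m : ℤ, x i = (m : ℝ)}

/-- Polar dual `S* = {y | ⟨x,y⟩ ≥ -1 ∀ x ∈ S}`. -/
def polarDual {n : Type*} [Fintype n] (S : Set (n → ℝ)) : Set (n → ℝ) :=
  {y | ∀ x ∈ S, -1 ≤ dot x y}

/-- `[S]`: the convex hull of the lattice points of `S`. -/
def latticeHull {n : Type*} [Fintype n] (S : Set (n → ℝ)) : Set (n → ℝ) :=
  convexHull ℝ (S ∩ latt n)

/-- A polytope: the convex hull of a finite set. -/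
def IsPolytope {n : Type*} [Fintype n] (P : Set (n → ℝ)) : Prop :=
  ∃ F : Set (n → ℝ), F.Finite ∧ P = convexHull ℝ F

/-- A lattice polytope: the convex hull of a finite set of lattice points. -/
def IsLatticePolytope {n : Type*} [Fintype n] (P : Set (n → ℝ)) : Prop :=
  ∃ F : Set (n → ℝ), F.Finite ∧ F ⊆ latt n ∧ P = convexHull ℝ F

/-- A full-dimensional polytope `P` with `0` in its interior is Q-reflexive if
`[[P]*] = P*`. -/
def IsQReflexive {n : Type*} [Fintype n] (P : Set (n → ℝ)) : Prop :=
  IsPolytope P ∧ 0 ∈ interior P ∧ latticeHull (polarDual (latticeHull P)) = polarDual P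

/-- A full-dimensional lattice polytope `P` with `0` in its interior is almost reflexive
if `[[P*]*] = P`. -/
def IsAlmostReflexive {n : Type*} [Fintype n] (P : Set (n → ℝ)) : Prop :=
  IsLatticePolytope P ∧ 0 ∈ interior P ∧
    latticeHull (polarDual (latticeHull (polarDual P))) = P

/-- A full-dimensional lattice polytope `P` with `0` in its interior is reflexive
if `P*` is a lattice polytope. -/
def IsReflexive {n : Type*} [Fintype n] (P : Set (n → ℝ)) : Prop :=
  IsLatticePolytope P ∧ 0 ∈ interior P ∧ IsLatticePolytope (polarDual P)

/-!
An extreme point `v` of `Δ* = [[Δ]*]` is a lattice point of `[Δ]*`, and it is nonzero because `Δ`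
is bounded, so `0` is an interior point of `Δ*`. The values `⟨x, v⟩` at lattice points `x ∈ Δ` are
integers `≥ -1`; if none of them were `-1`, they would all be `≥ 0`, so `2v` would lie in `[Δ]*`,
hence in `Δ*`, and `v` would be the midpoint of `0` and `2v` in `Δ*`.
-/

open Set

section
variable {n : Type*} [Fintype n]

theorem dot_eq_dotProduct (x y : n → ℝ) : dot x y = x ⬝ᵥ y := rfl

theorem abs_dot_le (x y : n → ℝ) : |dot x y| ≤ Fintype.card n * (‖x‖ * ‖y‖) :=
  calc |dot x y| ≤ ∑ i, |x i * y i| := Finset.abs_sum_le_sum_abs _ _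
    _ ≤ ∑ _i : n, ‖x‖ * ‖y‖ := by
      gcongr with i
      rw [abs_mul]
      exact mul_le_mul (norm_le_pi_norm x i) (norm_le_pi_norm y i) (abs_nonneg _) (norm_nonneg _)
    _ = Fintype.card n * (‖x‖ * ‖y‖) := by simp

theorem zero_mem_polarDual (S : Set (n → ℝ)) : (0 : n → ℝ) ∈ polarDual S := by
  intro x _
  simp [dot_eq_dotProduct]

theorem polarDual_convexHull (S : Set (n → ℝ)) : polarDual (convexHull ℝ S) = polarDual S := by
  refine Subset.antisymm (fun y hy x hx => hy x (subset_convexHull ℝ S hx)) fun y hy x hx => ?_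
  have hlin : IsLinearMap ℝ fun x : n → ℝ => dot x y :=
    ⟨fun a b => add_dotProduct a b y, fun c a => smul_dotProduct c a y⟩
  exact convexHull_min hy (convex_halfSpace_ge hlin (-1)) hx

theorem polarDual_mem_nhds_zero {S : Set (n → ℝ)} (hS : Bornology.IsBounded S) :
    polarDual S ∈ nhds 0 := by
  obtain ⟨C, hC₀, hC⟩ := hS.exists_pos_norm_le
  set K : ℝ := Fintype.card n * C + 1
  have hK : 0 < K := by positivity
  refine Metric.mem_nhds_iff.2 ⟨K⁻¹, inv_pos.2 hK, fun y hy x hx => ?_⟩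
  rw [mem_ball_zero_iff] at hy
  have hKy : K * ‖y‖ < 1 := by simpa using (lt_inv_mul_iff₀ hK).1 (by simpa using hy)
  have hxy : Fintype.card n * (‖x‖ * ‖y‖) ≤ K * ‖y‖ :=
    calc Fintype.card n * (‖x‖ * ‖y‖) ≤ Fintype.card n * (C * ‖y‖) := by gcongr; exact hC x hx
      _ ≤ K * ‖y‖ := by linarith [norm_nonneg y]
  linarith [neg_abs_le (dot x y), abs_dot_le x y]

theorem dot_mem_range_intCast {x y : n → ℝ} (hx : x ∈ latt n) (hy : y ∈ latt n) :
    ∃ z : ℤ, dot x y = z := by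
  choose a ha using hx
  choose b hb using hy
  exact ⟨∑ i, a i * b i, by simp [dot, ha, hb]⟩

theorem add_mem_latt {x y : n → ℝ} (hx : x ∈ latt n) (hy : y ∈ latt n) : x + y ∈ latt n := by
  intro i
  obtain ⟨a, ha⟩ := hx i
  obtain ⟨b, hb⟩ := hy i
  exact ⟨a + b, by simp [ha, hb]⟩

theorem exists_mem_latt_dot_eq_neg_one {S : Set (n → ℝ)}
    (hQ : latticeHull (polarDual (latticeHull S)) = polarDual S) {v : n → ℝ}
    (hv : v ∈ extremePoints ℝ (polarDual S)) (hv0 : v ≠ 0) :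
    ∃ x ∈ S ∩ latt n, dot x v = -1 := by
  obtain ⟨hvS, hvlatt⟩ : v ∈ polarDual (latticeHull S) ∩ latt n :=
    extremePoints_convexHull_subset (hQ ▸ hv)
  by_contra! hno
  have hvv : v + v ∈ polarDual (latticeHull S) := by
    rw [latticeHull, polarDual_convexHull]
    intro x hx
    have hxv : -1 ≤ dot x v := hvS x (subset_convexHull ℝ _ hx)
    obtain ⟨z, hz⟩ := dot_mem_range_intCast hx.2 hvlatt
    have hz0 : (0 : ℝ) ≤ z := by
      have : (-1 : ℤ) ≤ z := by exact_mod_cast hz ▸ hxv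
      have : z ≠ -1 := by rintro rfl; exact hno x hx (by simpa using hz)
      exact_mod_cast (by omega : (0 : ℤ) ≤ z)
    rw [dot_eq_dotProduct, dotProduct_add, ← dot_eq_dotProduct, hz]
    linarith
  have hvv' : v + v ∈ polarDual S := hQ ▸ subset_convexHull ℝ _ ⟨hvv, add_mem_latt hvlatt hvlatt⟩
  have h0 : v - v ∈ polarDual S := by simpa using zero_mem_polarDual S
  exact hv0 (sub_eq_self.1 (hv.2 h0 hvv' (mem_openSegment_sub_add v v)))

end

/-- Every facet of a Q-reflexive polytope contains a lattice point.
Precisely: let `Δ ⊆ ℝ^d` be a Q-reflexive polytope and let `v` be an extreme point of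
`Δ*`. Then `min_{x ∈ Δ} ⟨x, v⟩ = −1`, and the facet `F = {x ∈ Δ : ⟨x, v⟩ = −1}`
contains a lattice point. -/
theorem facet_contains_lattice_point {d : ℕ} (hd : 0 < d) (Δ : Set (Fin d → ℝ))
    (h : IsQReflexive Δ) (v : Fin d → ℝ) (hv : v ∈ Set.extremePoints ℝ (polarDual Δ)) :
    IsLeast {t : ℝ | ∃ x ∈ Δ, dot x v = t} (-1) ∧
      ({x ∈ Δ | dot x v = -1} ∩ latt (Fin d)).Nonempty := by
  obtain ⟨⟨F, hF, hΔF⟩, -, hQ⟩ := h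
  have : Nonempty (Fin d) := ⟨⟨0, hd⟩⟩
  have hΔ : Bornology.IsBounded Δ := hΔF ▸ isBounded_convexHull.2 hF.isBounded
  have hv0 : v ≠ 0 := by
    rintro rfl
    exact disjoint_left.1 (disjoint_interior_extremePoints _)
      (mem_interior_iff_mem_nhds.2 (polarDual_mem_nhds_zero hΔ)) hv
  obtain ⟨x, ⟨hxΔ, hxlatt⟩, hxv⟩ := exists_mem_latt_dot_eq_neg_one hQ hv hv0
  exact ⟨⟨⟨x, hxΔ, hxv⟩, fun _ ⟨y, hy, hyt⟩ => hyt ▸ hv.1 y hy⟩, x, ⟨hxΔ, hxv⟩, hxlatt⟩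
end
end

section
/- Let Δ = Δ₁ + ⋯ + Δ_r be a Q-nef-partition in ℝ^d with associated polytopes ∇₁,…,∇_r. Then (Δ₁ + ⋯ + Δ_r)* = conv((∇₁ ∩ ℤ^d) ∪ ⋯ ∪ (∇_r ∩ ℤ^d)). -/
open Pointwise

noncomputable section

/-- A Q-nef-partition: a Minkowski-sum decomposition `Δ = Δ₁ + ⋯ + Δ_r` of a
Q-reflexive polytope into polytopes with `0 ∈ Δᵢ`, such that
`[Δ] = [Δ₁] + ⋯ + [Δ_r]`. -/
def IsQNefPartition {d r : ℕ} (Δ : Fin r → Set (Fin d → ℝ)) : Prop :=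
  IsQReflexive (∑ i, Δ i) ∧ (∀ i, IsPolytope (Δ i)) ∧
    (∀ i, (0 : Fin d → ℝ) ∈ Δ i) ∧
    latticeHull (∑ i, Δ i) = ∑ i, latticeHull (Δ i)

/-- `∇_j := {y : ⟨x, y⟩ ≥ −δ_{ij} for all x ∈ [Δ_i] and all i}`. -/
def nabla {d r : ℕ} (Δ : Fin r → Set (Fin d → ℝ)) (j : Fin r) : Set (Fin d → ℝ) :=
  {y | ∀ i, ∀ x ∈ latticeHull (Δ i), -(if i = j then (1 : ℝ) else 0) ≤ dot x y}

lemma dot_comm {n : Type*} [Fintype n] (x y : n → ℝ) : dot x y = dot y x := by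
  simp [dot, mul_comm]

lemma dot_add_left {n : Type*} [Fintype n] (x x' y : n → ℝ) :
    dot (x + x') y = dot x y + dot x' y := by
  simp [dot, add_mul, Finset.sum_add_distrib]

lemma dot_smul_left {n : Type*} [Fintype n] (c : ℝ) (x y : n → ℝ) :
    dot (c • x) y = c * dot x y := by
  simp [dot, Finset.mul_sum, mul_assoc]

lemma isLinearMap_dot {n : Type*} [Fintype n] (y : n → ℝ) :
    IsLinearMap ℝ (fun x : n → ℝ => dot x y) :=
  ⟨fun a b => dot_add_left a b y, fun c a => dot_smul_left c a y⟩

lemma dot_sum_left {n ι : Type*} [Fintype n] [Fintype ι] (f : ι → (n → ℝ)) (y : n → ℝ) :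
    dot (∑ i, f i) y = ∑ i, dot (f i) y := by
  simp only [dot, Finset.sum_apply, Finset.sum_mul]
  exact Finset.sum_comm

lemma zero_mem_latt {n : Type*} [Fintype n] : (0 : n → ℝ) ∈ latt n :=
  fun _ => ⟨0, by simp⟩

lemma dot_int {n : Type*} [Fintype n] {x y : n → ℝ} (hx : x ∈ latt n) (hy : y ∈ latt n) :
    ∃ m : ℤ, dot x y = (m : ℝ) := by
  classical
  choose a ha using hx
  choose b hb using hy
  exact ⟨∑ i, a i * b i, by simp [dot, ha, hb]⟩

lemma convexHull_dot_ge {n : Type*} [Fintype n] {s : Set (n → ℝ)} {y : n → ℝ} {c : ℝ}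
    (h : ∀ x ∈ s, c ≤ dot x y) : ∀ x ∈ convexHull ℝ s, c ≤ dot x y := by
  intro x hx
  exact convexHull_min (s := s) (t := {x | c ≤ dot x y}) h
    (convex_halfSpace_ge (isLinearMap_dot y) c) hx

/-- For a Q-nef-partition `Δ = Δ₁ + ⋯ + Δ_r` with associated polytopes
`∇₁,…,∇_r`, one has `(Δ₁ + ⋯ + Δ_r)* = conv((∇₁ ∩ ℤ^d) ∪ ⋯ ∪ (∇_r ∩ ℤ^d))`. -/
theorem polarDual_sum_eq_convexHull_nabla {d r : ℕ} (hd : 0 < d)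
    (Δ : Fin r → Set (Fin d → ℝ)) (hQ : IsQNefPartition Δ) :
    polarDual (∑ i, Δ i) = convexHull ℝ (⋃ j, nabla Δ j ∩ latt (Fin d)) := by
  classical
  obtain ⟨⟨hTpoly, hT0, hTrefl⟩, hpoly, h0, hLH⟩ := hQ
  -- r is positive
  have hr : 0 < r := by
    by_contra hr0
    have hre : r = 0 := by omega
    have hempty : IsEmpty (Fin r) := by rw [hre]; infer_instance
    have hT : (∑ i, Δ i) = (0 : Set (Fin d → ℝ)) := by
      rw [Finset.univ_eq_empty, Finset.sum_empty]
    rw [hT] at hT0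
    have h0s : (0 : Set (Fin d → ℝ)) = {0} := rfl
    rw [h0s] at hT0
    have hn := mem_interior_iff_mem_nhds.mp hT0
    rw [Metric.mem_nhds_iff] at hn
    obtain ⟨ε, hε, hball⟩ := hn
    have hne : Nonempty (Fin d) := ⟨⟨0, hd⟩⟩
    have hp : (fun _ : Fin d => ε / 2) ∈ Metric.ball (0 : Fin d → ℝ) ε := by
      rw [mem_ball_zero_iff, pi_norm_const, Real.norm_eq_abs, abs_of_pos (by linarith)]
      linarith
    have := hball hp
    have : (fun _ : Fin d => ε / 2) = (0 : Fin d → ℝ) := this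
    have := congrFun this ⟨0, hd⟩
    simp at this
    linarith
  have h0H : ∀ i, (0 : Fin d → ℝ) ∈ latticeHull (Δ i) := fun i =>
    subset_convexHull ℝ _ ⟨h0 i, zero_mem_latt⟩
  have hmem : ∀ (g : Fin r → (Fin d → ℝ)), (∀ i, g i ∈ latticeHull (Δ i)) →
      (∑ i, g i) ∈ latticeHull (∑ i, Δ i) := by
    intro g hg
    rw [hLH]
    exact Set.finset_sum_mem_finset_sum _ _ _ (fun i _ => hg i)
  have hsingle : ∀ j x, x ∈ latticeHull (Δ j) → x ∈ latticeHull (∑ i, Δ i) := by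
    intro j x hx
    have h := hmem (fun i => if i = j then x else 0)
      (fun i => by by_cases h : i = j <;> simp [h, hx, h0H i])
    simpa [Finset.sum_ite_eq'] using h
  have hpair : ∀ j k, j ≠ k → ∀ x ∈ latticeHull (Δ j), ∀ z ∈ latticeHull (Δ k),
      x + z ∈ latticeHull (∑ i, Δ i) := by
    intro j k hjk x hx z hz
    have h := hmem (fun i => if i = j then x else if i = k then z else 0)
      (fun i => by
        by_cases h1 : i = j
        · simp [h1, hx]
        · by_cases h2 : i = k <;> simp [h1, h2, hz, h0H i, Ne.symm hjk])
    have heq : (fun i : Fin r => if i = j then x else if i = k then z else 0) =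
        fun i => (if i = j then x else 0) + (if i = k then z else 0) := by
      funext i
      by_cases h1 : i = j
      · by_cases h2 : i = k
        · exact absurd (h1.symm.trans h2) hjk
        · simp [h1, h2, hjk]
      · by_cases h2 : i = k <;> simp [h1, h2, Ne.symm hjk, hjk]
    rw [heq] at h
    simpa [Finset.sum_add_distrib, Finset.sum_ite_eq'] using h
  apply Set.Subset.antisymm
  · -- ⊆
    rw [← hTrefl]
    apply convexHull_mono
    rintro y ⟨hyD, hyL⟩
    by_cases hbad : ∃ j, ∃ x ∈ Δ j ∩ latt (Fin d), dot x y ≤ -1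
    · obtain ⟨j, xj, hxj, hxjdot⟩ := hbad
      refine Set.mem_iUnion.2 ⟨j, ?_, hyL⟩
      intro i x hx
      by_cases hij : i = j
      · subst hij
        simp only [if_pos rfl]
        refine convexHull_dot_ge (c := -1) ?_ x hx
        intro x' hx'
        exact hyD _ (hsingle i x' (subset_convexHull ℝ _ hx'))
      · simp only [if_neg hij, neg_zero]
        refine convexHull_dot_ge (c := 0) ?_ x hx
        intro x' hx'
        by_contra hlt
        push_neg at hlt
        obtain ⟨m, hm⟩ := dot_int hx'.2 hyL
        have hm0 : m < 0 := by exact_mod_cast hm ▸ hlt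
        have hm1 : dot x' y ≤ -1 := by
          rw [hm]; exact_mod_cast (by omega : m ≤ -1)
        have hsum := hpair j i (fun h => hij h.symm) xj (subset_convexHull ℝ _ hxj)
          x' (subset_convexHull ℝ _ hx')
        have hge := hyD _ hsum
        rw [dot_add_left] at hge
        linarith
    · push_neg at hbad
      refine Set.mem_iUnion.2 ⟨⟨0, hr⟩, ?_, hyL⟩
      intro i x hx
      have h0le : ∀ x' ∈ Δ i ∩ latt (Fin d), (0 : ℝ) ≤ dot x' y := by
        intro x' hx'
        have h1 := hbad i x' hx'
        obtain ⟨m, hm⟩ := dot_int hx'.2 hyL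
        have hm1 : (-1 : ℝ) < (m : ℝ) := hm ▸ h1
        have : (-1 : ℤ) < m := by exact_mod_cast hm1
        rw [hm]
        exact_mod_cast (by omega : (0 : ℤ) ≤ m)
      have := convexHull_dot_ge h0le x hx
      refine le_trans ?_ this
      split <;> norm_num
  · -- ⊇
    refine convexHull_min ?_ ?_
    · rintro y hy
      rw [Set.mem_iUnion] at hy
      obtain ⟨j, hyn, hyL⟩ := hy
      have hpd : y ∈ polarDual (latticeHull (∑ i, Δ i)) := by
        intro x hx
        rw [hLH, Set.mem_fintype_sum] at hx
        obtain ⟨g, hg, rfl⟩ := hx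
        rw [dot_sum_left]
        have hbound : ∀ i, -(if i = j then (1 : ℝ) else 0) ≤ dot (g i) y :=
          fun i => hyn i (g i) (hg i)
        calc (-1 : ℝ) = ∑ i, -(if i = j then (1 : ℝ) else 0) := by
              simp [Finset.sum_ite_eq']
          _ ≤ ∑ i, dot (g i) y := Finset.sum_le_sum (fun i _ => hbound i)
      have hmem' : y ∈ latticeHull (polarDual (latticeHull (∑ i, Δ i))) :=
        subset_convexHull ℝ _ ⟨hpd, hyL⟩
      rwa [hTrefl] at hmem'
    · intro y hy z hz a b ha hb hab
      intro x hx
      have hy' := hy x hx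
      have hz' := hz x hx
      have heq : dot x (a • y + b • z) = a * dot x y + b * dot x z := by
        rw [dot_comm, dot_add_left, dot_smul_left, dot_smul_left, dot_comm y x, dot_comm z x]
      rw [heq]
      nlinarith
end
end
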